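/- The doubled Weyl transform inverts the doubled Wigner transform: for every d×d complex matrix O, Op[Wig[O]] = O, i.e., (1/2)·Σ_{m∈(ZMod 2d)²} (1/(2d))·Tr(A(m)†·O)·A(m) = O. -/

import Mathlib

open scoped BigOperators
open Matrix

noncomputable section

/-- `omega n a = exp(2πi a / n)`, the `n`-th roots of unity raised to integer power `a`. -/
def omega (n : ℕ) (a : ℤ) : ℂ := Complex.exp (2 * Real.pi * Complex.I * a / n)

/-- `Zpow d k = Σ_j ω_d^(k·j) |j⟩⟨j|`, the `k`-th power of the clock operator. -/
def Zpow (d : ℕ) (k : ℤ) : Matrix (ZMod d) (ZMod d) ℂ :=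
  Matrix.of fun i j => if i = j then omega d (k * (j.val : ℤ)) else 0

/-- `Xpow d k = Σ_j |j+k⟩⟨j|`, the `k`-th power of the shift operator. -/
def Xpow (d : ℕ) (k : ℤ) : Matrix (ZMod d) (ZMod d) ℂ :=
  Matrix.of fun i j => if i = j + (k : ZMod d) then 1 else 0

/-- The Weyl–Heisenberg displacement operator `V(k) = ω_{2d}^{-k₁k₂} Z^{k₂} X^{k₁}` for `k ∈ ℤ²`. -/
def Vint (d : ℕ) [NeZero d] (k : ℤ × ℤ) : Matrix (ZMod d) (ZMod d) ℂ :=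
  omega (2 * d) (-(k.1 * k.2)) • (Zpow d k.2 * Xpow d k.1)

/-- The WHDO on the doubled phase space `(ZMod (2d))²`. -/
def V (d : ℕ) [NeZero d] (m : ZMod (2 * d) × ZMod (2 * d)) : Matrix (ZMod d) (ZMod d) ℂ :=
  Vint d ((m.1.val : ℤ), (m.2.val : ℤ))

/-- Discrete parity operator `R = Σ_j |-j⟩⟨j|`. -/
def R (d : ℕ) : Matrix (ZMod d) (ZMod d) ℂ :=
  Matrix.of fun i j => if i = -j then 1 else 0

/-- Doubled phase-point operator `A(m) = V(m)·R`. -/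
def A (d : ℕ) [NeZero d] (m : ZMod (2 * d) × ZMod (2 * d)) : Matrix (ZMod d) (ZMod d) ℂ :=
  V d m * R d

variable (d : ℕ) [NeZero d]

/-- Doubled Wigner transform: `Wig[O](m) = (1/(2d)) Tr(A(m)† O)`. -/
def Wig (O : Matrix (ZMod d) (ZMod d) ℂ) (m : ZMod (2 * d) × ZMod (2 * d)) : ℂ :=
  (1 / (2 * (d : ℂ))) * ((A d m)ᴴ * O).trace

/-- Doubled Weyl transform: `Op[f] = (1/2) Σ_m f(m) A(m)`. -/
def OpW (f : ZMod (2 * d) × ZMod (2 * d) → ℂ) : Matrix (ZMod d) (ZMod d) ℂ :=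
  (1 / 2 : ℂ) • ∑ m : ZMod (2 * d) × ZMod (2 * d), f m • A d m

/-- The projector `P = Wig ∘ Op` on functions on the doubled phase space. -/
def P (f : ZMod (2 * d) × ZMod (2 * d) → ℂ) : ZMod (2 * d) × ZMod (2 * d) → ℂ :=
  Wig d (OpW d f)

/-- Inner product on functions on the doubled phase space. -/
def ip (f g : ZMod (2 * d) × ZMod (2 * d) → ℂ) : ℂ :=
  ∑ m : ZMod (2 * d) × ZMod (2 * d), (starRingEnd ℂ) (f m) * g m

/-- Cross-correlation `(f ⋆ g)(m) = Σ_{m'} conj(f m') g(m'+m)`. -/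
def crossCor (f g : ZMod (2 * d) × ZMod (2 * d) → ℂ) (m : ZMod (2 * d) × ZMod (2 * d)) : ℂ :=
  ∑ m' : ZMod (2 * d) × ZMod (2 * d), (starRingEnd ℂ) (f m') * g (m' + m)

/-- The doubling map `ZMod d → ZMod (2d)`, `a ↦ 2a`. -/
def dbl (a : ZMod d) : ZMod (2 * d) := ((2 * a.val : ℕ) : ZMod (2 * d))

/-- The doubling map on the phase space. -/
def dbl2 (α : ZMod d × ZMod d) : ZMod (2 * d) × ZMod (2 * d) := (dbl d α.1, dbl d α.2)

/-- A stencil `M` is valid if its projection `M̄ = P M` is real-valued (M1),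
sums to 1 (M2), and satisfies the autocorrelation condition (M3). -/
def IsValidStencil (M : ZMod (2 * d) × ZMod (2 * d) → ℂ) : Prop :=
  (∀ m, (starRingEnd ℂ) (P d M m) = P d M m) ∧
  (∑ m : ZMod (2 * d) × ZMod (2 * d), P d M m) = 1 ∧
  (∀ α : ZMod d × ZMod d,
    crossCor d (P d M) (P d M) (dbl2 d α) = if α = 0 then 1 else 0)

/-- The `M`-PPO frame generated by a stencil `M`:
`A^M(α) = (1/2) Σ_{m'} M(m') A(m' + 2α)`. -/
def AM (M : ZMod (2 * d) × ZMod (2 * d) → ℂ) (α : ZMod d × ZMod d) :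
    Matrix (ZMod d) (ZMod d) ℂ :=
  (1 / 2 : ℂ) • ∑ m' : ZMod (2 * d) × ZMod (2 * d), M m' • A d (m' + dbl2 d α)

/-- A family of phase-point operators on `(ZMod d)²` is a valid PPO frame if it is
Hermitian (A1), trace-1 (A2), orthogonal (A3), and WHDO-covariant (A4). -/
def IsValidPPOFrame (B : ZMod d × ZMod d → Matrix (ZMod d) (ZMod d) ℂ) : Prop :=
  (∀ α, (B α)ᴴ = B α) ∧
  (∀ α, (B α).trace = 1) ∧
  (∀ α β, ((B α)ᴴ * B β).trace = if α = β then (d : ℂ) else 0) ∧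
  (∀ (k : ℤ × ℤ) (α : ZMod d × ZMod d),
    Vint d k * B α * (Vint d k)ᴴ = B (α + ((k.1 : ZMod d), (k.2 : ZMod d))))

/-- The `M`-Wigner transform: `Wig^M[O](α) = (1/d) Tr(A^M(α)† O)`. -/
def WigM (M : ZMod (2 * d) × ZMod (2 * d) → ℂ) (O : Matrix (ZMod d) (ZMod d) ℂ)
    (α : ZMod d × ZMod d) : ℂ :=
  (1 / (d : ℂ)) * ((AM d M α)ᴴ * O).trace

/-- The `M`-Weyl transform: `Op^M[f] = Σ_α f(α) A^M(α)`. -/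
def OpM (M : ZMod (2 * d) × ZMod (2 * d) → ℂ) (f : ZMod d × ZMod d → ℂ) :
    Matrix (ZMod d) (ZMod d) ℂ :=
  ∑ α : ZMod d × ZMod d, f α • AM d M α

/-- The symplectic discrete Fourier transform. -/
def SDFT (f : ZMod (2 * d) × ZMod (2 * d) → ℂ) (m : ZMod (2 * d) × ZMod (2 * d)) : ℂ :=
  (1 / (2 * (d : ℂ))) * ∑ m' : ZMod (2 * d) × ZMod (2 * d),
    omega (2 * d) (-((m.1.val : ℤ) * (m'.2.val : ℤ) - (m.2.val : ℤ) * (m'.1.val : ℤ))) * f m'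


/-- Coarse-grain-stencil PPO frame: `B(α) = (1/2) Σ_{b∈{0,1}²} A(2α + b)`. -/
def Bcgs (α : ZMod d × ZMod d) : Matrix (ZMod d) (ZMod d) ℂ :=
  (1 / 2 : ℂ) • ∑ b : ZMod 2 × ZMod 2,
    A d (dbl d α.1 + (b.1.val : ZMod (2 * d)), dbl d α.2 + (b.2.val : ZMod (2 * d)))

/-- Momentum basis state `|p⟩ = (1/√d) Σ_j ω_d^{p j} |j⟩`. -/
def pvec (p : ZMod d) : ZMod d → ℂ :=
  fun j => (1 / ((Real.sqrt d : ℝ) : ℂ)) * omega d ((p.val : ℤ) * (j.val : ℤ))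

/-- One-dimensional Dirichlet kernel `K(m) = (1/d) Σ_{t=-(d-1)/2}^{(d-1)/2} ω_{2d}^{t m}`. -/
def Kdir (m : ZMod (2 * d)) : ℂ :=
  (1 / (d : ℂ)) * ∑ t ∈ Finset.Icc (-(((d : ℤ) - 1) / 2)) (((d : ℤ) - 1) / 2),
    omega (2 * d) (t * (m.val : ℤ))

end

section Aux

lemma omega_add (n : ℕ) (a b : ℤ) : omega n (a + b) = omega n a * omega n b := by
  rw [omega, omega, omega, ← Complex.exp_add]
  congr 1
  push_cast
  ring

lemma omega_zero (n : ℕ) : omega n 0 = 1 := by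
  simp [omega]

lemma omega_conj (n : ℕ) (a : ℤ) : (starRingEnd ℂ) (omega n a) = omega n (-a) := by
  rw [omega, omega, ← Complex.exp_conj]
  congr 1
  simp only [map_div₀, _root_.map_mul, Complex.conj_I, map_ofNat, Complex.conj_ofReal,
    map_intCast, map_natCast]
  push_cast
  ring

lemma omega_neg_mul (n : ℕ) (a : ℤ) : omega n (-a) * omega n a = 1 := by
  rw [← omega_add]; simp [omega_zero]

lemma omega_nat_mul (n : ℕ) (t : ℕ) (a : ℤ) : omega n a ^ t = omega n (t * a) := by
  rw [omega, omega, ← Complex.exp_nat_mul]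
  congr 1
  push_cast
  ring

lemma omega_eq_one_iff (n : ℕ) (hn : n ≠ 0) (a : ℤ) : omega n a = 1 ↔ (n : ℤ) ∣ a := by
  rw [omega, Complex.exp_eq_one_iff]
  constructor
  · rintro ⟨k, hk⟩
    refine ⟨k, ?_⟩
    have hn' : (n : ℂ) ≠ 0 := by exact_mod_cast hn
    have h2 : (2 * Real.pi * Complex.I) ≠ 0 := by
      simp [Real.pi_ne_zero, Complex.I_ne_zero, Complex.ofReal_ne_zero]
    have : (a : ℂ) = k * n := by
      field_simp at hk
      have := hk
      -- hk : 2 * π * I * a = k * (2 * π * I) * n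
      have h3 : (2 * Real.pi * Complex.I) * a = (2 * Real.pi * Complex.I) * (k * n) := by
        rw [hk]; ring
      exact mul_left_cancel₀ h2 h3
    have : (a:ℂ) = (n:ℂ) * k := by rw [this]; ring
    exact_mod_cast this
  · rintro ⟨k, rfl⟩
    refine ⟨k, ?_⟩
    have hn' : (n : ℂ) ≠ 0 := by exact_mod_cast hn
    field_simp
    push_cast; ring

end Aux

section Aux2

lemma sum_zmod {n : ℕ} [NeZero n] (g : ZMod n → ℂ) :
    ∑ t : ZMod n, g t = ∑ i ∈ Finset.range n, g (i : ZMod n) := by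
  apply Finset.sum_nbij' (fun t : ZMod n => t.val) (fun i : ℕ => (i : ZMod n))
  · intro a _; exact Finset.mem_range.mpr (ZMod.val_lt a)
  · intro a _; exact Finset.mem_univ _
  · intro a _; simp [ZMod.natCast_val, ZMod.cast_id]
  · intro a ha; exact ZMod.val_cast_of_lt (Finset.mem_range.mp ha)
  · intro a _; simp [ZMod.natCast_val, ZMod.cast_id]

lemma cast_val_cast {d : ℕ} [NeZero d] (i : ℕ) :
    (((i : ZMod (2 * d)).val : ℕ) : ZMod d) = (i : ZMod d) := by
  haveI : NeZero (2 * d) := ⟨by have := NeZero.ne d; omega⟩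
  rw [ZMod.val_natCast]
  conv_lhs => rw [← ZMod.natCast_mod (i % (2 * d)) d,
    Nat.mod_mod_of_dvd i (⟨2, by ring⟩ : d ∣ 2 * d)]
  rw [ZMod.natCast_mod]

lemma sum_double {d : ℕ} [NeZero d] (g : ZMod d → ℂ) :
    ∑ t : ZMod (2 * d), g ((t.val : ℕ) : ZMod d) = 2 * ∑ c : ZMod d, g c := by
  haveI : NeZero (2 * d) := ⟨by have := NeZero.ne d; omega⟩
  rw [sum_zmod (fun t : ZMod (2*d) => g ((t.val : ℕ) : ZMod d))]
  simp_rw [cast_val_cast]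
  rw [show 2 * d = d + d by ring, Finset.sum_range_add]
  have h2 : ∀ i : ℕ, ((d + i : ℕ) : ZMod d) = (i : ZMod d) := by
    intro i; push_cast; simp
  simp_rw [h2]
  rw [sum_zmod g]
  ring

lemma sum_omega_eq {d : ℕ} [NeZero d] (i k : ZMod d) :
    ∑ t : ZMod (2 * d), omega d ((t.val : ℤ) * ((i.val : ℤ) - (k.val : ℤ)))
      = if i = k then 2 * (d : ℂ) else 0 := by
  haveI : NeZero (2 * d) := ⟨by have := NeZero.ne d; omega⟩
  set a : ℤ := (i.val : ℤ) - (k.val : ℤ) with ha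
  have hz2d : omega d a ^ (2 * d) = 1 := by
    rw [omega_nat_mul, omega_eq_one_iff d (NeZero.ne d)]
    exact ⟨2 * a, by push_cast; ring⟩
  have hterm : ∀ t : ZMod (2 * d), omega d ((t.val : ℤ) * a) = omega d a ^ t.val := by
    intro t; rw [omega_nat_mul]
  simp_rw [hterm]
  rw [sum_zmod (fun t : ZMod (2*d) => omega d a ^ t.val)]
  have hval : ∀ j : ℕ, omega d a ^ ((j : ZMod (2*d)).val) = omega d a ^ j := by
    intro j
    rw [ZMod.val_natCast]
    conv_rhs => rw [← Nat.mod_add_div j (2 * d)]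
    rw [pow_add, pow_mul, hz2d, one_pow, mul_one]
  simp_rw [hval]
  by_cases h : i = k
  · have ha0 : a = 0 := by rw [ha, h]; ring
    simp [ha0, omega_zero, h]
  · have hne : omega d a ≠ 1 := by
      rw [Ne, omega_eq_one_iff d (NeZero.ne d)]
      rintro ⟨c, hc⟩
      have hi := ZMod.val_lt i
      have hk := ZMod.val_lt k
      have hd := NeZero.ne d
      have : (i.val : ℤ) = (k.val : ℤ) := by
        have h0 : a = 0 := by
          refine Int.eq_zero_of_dvd_of_natAbs_lt_natAbs ⟨c, hc⟩ ?_
          rw [ha]; omega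
        rw [ha] at h0; omega
      exact h (ZMod.val_injective _ (by exact_mod_cast this))
    rw [geom_sum_eq hne, hz2d]
    simp [h]

end Aux2

section Main

variable (d : ℕ) [NeZero d]

lemma A_apply (m : ZMod (2 * d) × ZMod (2 * d)) (i j : ZMod d) :
    A d m i j = if i = -j + ((m.1.val : ℕ) : ZMod d) then
      omega (2 * d) (-((m.1.val : ℤ) * (m.2.val : ℤ))) * omega d ((m.2.val : ℤ) * (i.val : ℤ))
    else 0 := by
  rw [A, Matrix.mul_apply]
  rw [Finset.sum_eq_single (-j) (fun b _ hb => by simp [R, hb]) (by simp)]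
  simp only [R, Matrix.of_apply, if_pos rfl, mul_one]
  rw [V, Vint, Matrix.smul_apply, Matrix.mul_apply]
  rw [Finset.sum_eq_single i (fun b _ hb => by simp [Zpow, Ne.symm hb]) (by simp)]
  simp only [Zpow, Xpow, Matrix.of_apply, if_pos rfl, smul_eq_mul]
  have : (((m.1.val : ℤ)) : ZMod d) = ((m.1.val : ℕ) : ZMod d) := by push_cast; rfl
  rw [this]
  split_ifs <;> ring

lemma main_sum (i j k l : ZMod d) :
    ∑ m : ZMod (2 * d) × ZMod (2 * d), (starRingEnd ℂ) (A d m k l) * A d m i j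
      = if k = i ∧ l = j then 4 * (d : ℂ) else 0 := by
  have key : ∀ m : ZMod (2 * d) × ZMod (2 * d),
      (starRingEnd ℂ) (A d m k l) * A d m i j
      = if (k = -l + ((m.1.val : ℕ) : ZMod d) ∧ i = -j + ((m.1.val : ℕ) : ZMod d)) then
          omega d ((m.2.val : ℤ) * ((i.val : ℤ) - (k.val : ℤ))) else 0 := by
    intro m
    rw [A_apply, A_apply]
    rw [apply_ite (starRingEnd ℂ), map_zero, _root_.map_mul, omega_conj, omega_conj, neg_neg]
    by_cases h1 : k = -l + ((m.1.val : ℕ) : ZMod d) <;>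
      by_cases h2 : i = -j + ((m.1.val : ℕ) : ZMod d) <;>
      simp only [h1, h2, if_true, if_false, and_self, and_true, and_false, true_and, false_and,
        zero_mul, mul_zero, if_pos, ite_true, ite_false]
    rw [mul_mul_mul_comm, mul_comm (omega (2 * d) _), omega_neg_mul, one_mul, ← omega_add]
    congr 1
    ring
  simp_rw [key]
  rw [Fintype.sum_prod_type]
  have inner : ∀ m1 : ZMod (2 * d),
      (∑ m2 : ZMod (2 * d),
        if (k = -l + ((m1.val : ℕ) : ZMod d) ∧ i = -j + ((m1.val : ℕ) : ZMod d)) then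
          omega d ((m2.val : ℤ) * ((i.val : ℤ) - (k.val : ℤ))) else 0)
      = if (k = -l + ((m1.val : ℕ) : ZMod d) ∧ i = -j + ((m1.val : ℕ) : ZMod d)) then
          (if i = k then 2 * (d : ℂ) else 0) else 0 := by
    intro m1
    by_cases h : (k = -l + ((m1.val : ℕ) : ZMod d) ∧ i = -j + ((m1.val : ℕ) : ZMod d))
    · rw [if_pos h]
      simp_rw [if_pos h]
      exact sum_omega_eq i k
    · rw [if_neg h]
      simp_rw [if_neg h]
      simp
  simp_rw [inner]
  by_cases hik : i = k
  · subst hik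
    by_cases hjl : l = j
    · subst hjl
      have hcond : ∀ c : ZMod d, (i = -l + c) ↔ (c = l + i) := by
        intro c
        constructor
        · intro h; rw [h]; abel
        · intro h; rw [h]; abel
      simp only [and_self, eq_self_iff_true, if_true]
      simp_rw [hcond]
      rw [sum_double (fun c => if c = l + i then 2 * (d : ℂ) else 0)]
      rw [Finset.sum_ite_eq' Finset.univ (l + i) (fun _ => 2 * (d : ℂ))]
      simp only [Finset.mem_univ, if_true]
      ring
    · have hcond : ∀ m1 : ZMod (2 * d),
          ¬(i = -l + ((m1.val : ℕ) : ZMod d) ∧ i = -j + ((m1.val : ℕ) : ZMod d)) := by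
        rintro m1 ⟨h1, h2⟩
        apply hjl
        have h4 := h1.symm.trans h2
        exact neg_injective (add_right_cancel h4)
      simp only [hcond, if_false, Finset.sum_const_zero]
      simp [hjl]
  · have : ¬(k = i ∧ l = j) := by tauto
    simp only [if_neg hik, this, if_false]
    simp

end Main

theorem stmt4 (d : ℕ) [NeZero d] (O : Matrix (ZMod d) (ZMod d) ℂ) :
    OpW d (Wig d O) = O := by
  ext i j
  have htr : ∀ m : ZMod (2 * d) × ZMod (2 * d),
      ((A d m)ᴴ * O).trace = ∑ x : ZMod d, ∑ y : ZMod d, (starRingEnd ℂ) (A d m y x) * O y x := by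
    intro m
    simp [Matrix.trace, Matrix.diag, Matrix.mul_apply, Matrix.conjTranspose_apply]
  have h1 : ∀ m : ZMod (2 * d) × ZMod (2 * d), Wig d O m * A d m i j
      = (1 / (2 * (d : ℂ))) *
        ((∑ x : ZMod d, ∑ y : ZMod d, (starRingEnd ℂ) (A d m y x) * O y x) * A d m i j) := by
    intro m
    rw [Wig, htr]
    ring
  have h2 : ∑ m : ZMod (2 * d) × ZMod (2 * d),
      (∑ x : ZMod d, ∑ y : ZMod d, (starRingEnd ℂ) (A d m y x) * O y x) * A d m i j
      = 4 * (d : ℂ) * O i j := by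
    simp_rw [Finset.sum_mul]
    rw [Finset.sum_comm]
    have h3 : ∀ x : ZMod d,
        ∑ m : ZMod (2 * d) × ZMod (2 * d), ∑ y : ZMod d,
          (starRingEnd ℂ) (A d m y x) * O y x * A d m i j
        = ∑ y : ZMod d, O y x * (if y = i ∧ x = j then 4 * (d : ℂ) else 0) := by
      intro x
      rw [Finset.sum_comm]
      refine Finset.sum_congr rfl fun y _ => ?_
      have : ∀ m : ZMod (2 * d) × ZMod (2 * d),
          (starRingEnd ℂ) (A d m y x) * O y x * A d m i j
          = O y x * ((starRingEnd ℂ) (A d m y x) * A d m i j) := fun m => by ring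
      simp_rw [this, ← Finset.mul_sum, main_sum]
    simp_rw [h3, mul_ite, mul_zero, ite_and]
    have h5 : ∀ x : ZMod d,
        (∑ y : ZMod d, if y = i then (if x = j then O y x * (4 * (d : ℂ)) else 0) else 0)
        = if x = j then O i x * (4 * (d : ℂ)) else 0 := by
      intro x
      rw [Finset.sum_ite_eq' Finset.univ i (fun y => if x = j then O y x * (4 * (d : ℂ)) else 0)]
      simp
    simp_rw [h5]
    rw [Finset.sum_ite_eq' Finset.univ j (fun x => O i x * (4 * (d : ℂ)))]
    simp only [Finset.mem_univ, if_true]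
    ring
  have hd : (d : ℂ) ≠ 0 := by exact_mod_cast NeZero.ne d
  rw [OpW, Matrix.smul_apply, Matrix.sum_apply]
  simp_rw [Matrix.smul_apply, smul_eq_mul, h1, ← Finset.mul_sum, h2]
  field_simp
  ring
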